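/- arXiv:1806.10833 — 3 statements merged into one kernel-verified Lean document; each statement's English description precedes it below -/
import Mathlib

section
/- Let Γ_f = (V, σ, η) be a truncated submodular profit cooperative game. Then the core C(Γ_f) is nonempty if and only if at least one of the following holds: (i) there exists a veto player in Γ_f, or (ii) σ(S) = Σ_{i∈S} σ({i}) for every subset S ⊆ V. -/
/-!
If nobody is a veto player, then every coalition `V ∖ {i}` reaches the threshold, so a core
allocation pays each player `i` at most its marginal contribution `σ V - σ (V ∖ {i})` to the
grand coalition. By submodularity these marginal contributions telescope to at most `σ S` on
every `S`, and summed over `V` they are at least `σ V` because the allocation is efficient; so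
`σ S` equals the sum of the marginal contributions over `S`, which makes `σ` additive.
Conversely, giving `σ V` to a veto player, or `σ {i}` to each `i` when `σ` is additive, is a core
allocation.
-/

open Finset

section SetFunction

variable {α : Type*}

noncomputable def truncated (σ : Finset α → ℝ) (η : ℝ) (S : Finset α) : ℝ :=
  if η ≤ σ S then σ S else 0

def IsVetoPlayer (σ : Finset α → ℝ) (η : ℝ) (i : α) : Prop :=
  ∀ S : Finset α, i ∉ S → σ S < η

lemma truncated_le {σ : Finset α → ℝ} {η : ℝ} {S : Finset α} (hS : 0 ≤ σ S) :
    truncated σ η S ≤ σ S := by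
  unfold truncated
  split_ifs
  exacts [le_rfl, hS]

variable [DecidableEq α]

def IsSubmodular (σ : Finset α → ℝ) : Prop :=
  ∀ (S T : Finset α) (u : α), S ⊆ T → u ∉ T → σ (insert u T) - σ T ≤ σ (insert u S) - σ S

section Marginal

variable [Fintype α] {σ : Finset α → ℝ}

def grandMarginal (σ : Finset α → ℝ) (i : α) : ℝ :=
  σ univ - σ (univ.erase i)

lemma grandMarginal_le (hsub : IsSubmodular σ) {i : α} {B : Finset α} (hi : i ∉ B) :
    grandMarginal σ i ≤ σ (insert i B) - σ B := by
  have h := hsub B (univ.erase i) i (subset_erase.2 ⟨subset_univ B, hi⟩) (notMem_erase i univ)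
  rwa [insert_erase (mem_univ i)] at h

lemma sdiff_add_sum_grandMarginal_le (hsub : IsSubmodular σ) {S A : Finset α} (hSA : S ⊆ A) :
    σ (A \ S) + ∑ i ∈ S, grandMarginal σ i ≤ σ A := by
  induction S using Finset.induction_on with
  | empty => simp
  | insert j S hj ih =>
    have hjA : j ∈ A \ S := mem_sdiff.2 ⟨hSA (mem_insert_self j S), hj⟩
    have hstep := grandMarginal_le hsub (notMem_erase j (A \ S))
    rw [insert_erase hjA] at hstep
    rw [sum_insert hj, sdiff_insert]
    linarith [ih ((subset_insert j S).trans hSA)]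

lemma sum_grandMarginal_le (hsub : IsSubmodular σ) (hempty : σ ∅ = 0) (A : Finset α) :
    ∑ i ∈ A, grandMarginal σ i ≤ σ A := by
  simpa [hempty] using sdiff_add_sum_grandMarginal_le hsub (subset_refl A)

lemma add_sum_compl_grandMarginal_le (hsub : IsSubmodular σ) (T : Finset α) :
    σ T + ∑ i ∈ Tᶜ, grandMarginal σ i ≤ σ univ := by
  simpa using sdiff_add_sum_grandMarginal_le hsub (subset_univ Tᶜ)

lemma eq_sum_grandMarginal (hsub : IsSubmodular σ) (hempty : σ ∅ = 0)
    (h : σ univ ≤ ∑ i, grandMarginal σ i) (T : Finset α) :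
    σ T = ∑ i ∈ T, grandMarginal σ i := by
  have hsplit := sum_add_sum_compl T (grandMarginal σ)
  linarith [sum_grandMarginal_le hsub hempty T, add_sum_compl_grandMarginal_le hsub T]

lemma eq_sum_singleton_of_le_sum_grandMarginal (hsub : IsSubmodular σ) (hempty : σ ∅ = 0)
    (h : σ univ ≤ ∑ i, grandMarginal σ i) (S : Finset α) :
    σ S = ∑ i ∈ S, σ {i} := by
  have hsingle (i : α) : grandMarginal σ i = σ {i} := by
    simpa using (eq_sum_grandMarginal hsub hempty h {i}).symm
  rw [eq_sum_grandMarginal hsub hempty h S]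
  exact sum_congr rfl fun i _ => hsingle i

end Marginal

section Core

variable {σ : Finset α → ℝ} {η : ℝ}

lemma le_grandMarginal_of_not_isVetoPlayer [Fintype α] (hmono : Monotone σ) {x : α → ℝ}
    (hx : ∑ j, x j = σ univ) (hcore : ∀ S, truncated σ η S ≤ ∑ j ∈ S, x j) {i : α}
    (hi : ¬ IsVetoPlayer σ η i) : x i ≤ grandMarginal σ i := by
  obtain ⟨S, hiS, hS⟩ : ∃ S : Finset α, i ∉ S ∧ η ≤ σ S := by
    simpa [IsVetoPlayer] using hi
  have hη : η ≤ σ (univ.erase i) :=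
    hS.trans (hmono (subset_erase.2 ⟨subset_univ S, hiS⟩))
  have hrest : σ (univ.erase i) ≤ ∑ j ∈ univ.erase i, x j := by
    simpa [truncated, hη] using hcore (univ.erase i)
  have hsplit := add_sum_erase univ x (mem_univ i)
  unfold grandMarginal
  linarith

lemma truncated_le_sum_single_of_isVetoPlayer [Fintype α] (hmono : Monotone σ)
    (hempty : σ ∅ = 0) {i : α} (hi : IsVetoPlayer σ η i) (S : Finset α) :
    truncated σ η S ≤ ∑ j ∈ S, Pi.single i (σ univ) j := by
  rw [sum_pi_single']
  by_cases hiS : i ∈ S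
  · rw [if_pos hiS]
    exact (truncated_le (hempty ▸ hmono (empty_subset S))).trans (hmono (subset_univ S))
  · rw [if_neg hiS, truncated, if_neg (not_le.2 (hi S hiS))]

end Core

end SetFunction

theorem core_nonempty_iff_general {V : Type*} [Fintype V] [DecidableEq V]
    (σ : Finset V → ℝ) (η : ℝ)
    (hmono : ∀ S T : Finset V, S ⊆ T → σ S ≤ σ T)
    (hsub : ∀ (S T : Finset V) (u : V), S ⊆ T → u ∉ T →
      σ (insert u T) - σ T ≤ σ (insert u S) - σ S)
    (hempty : σ ∅ = 0)
    (f : Finset V → ℝ)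
    (hf : ∀ S : Finset V, f S = if η ≤ σ S then σ S else 0) :
    (∃ x : V → ℝ, (∑ i, x i) = σ univ ∧ ∀ S : Finset V, f S ≤ ∑ i ∈ S, x i) ↔
      ((∃ i : V, ∀ S : Finset V, i ∉ S → σ S < η) ∨
        (∀ S : Finset V, σ S = ∑ i ∈ S, σ {i})) := by
  obtain rfl : f = truncated σ η := funext hf
  have hmono : Monotone σ := fun S T h => hmono S T h
  constructor
  · rintro ⟨x, hx, hcore⟩
    refine or_iff_not_imp_left.2 fun hveto =>
      eq_sum_singleton_of_le_sum_grandMarginal hsub hempty ?_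
    calc σ univ = ∑ i, x i := hx.symm
      _ ≤ ∑ i, grandMarginal σ i := sum_le_sum fun i _ =>
        le_grandMarginal_of_not_isVetoPlayer hmono hx hcore (not_exists.1 hveto i)
  · rintro (⟨i, hi⟩ | hadd)
    · exact ⟨Pi.single i (σ univ), by simp,
        truncated_le_sum_single_of_isVetoPlayer hmono hempty hi⟩
    · exact ⟨fun i => σ {i}, (hadd univ).symm,
        fun S => (truncated_le (hempty ▸ hmono (empty_subset S))).trans_eq (hadd S)⟩

/-- For a truncated submodular profit cooperative game
`Γ_f = (V, σ, η)`, the core is nonempty iff there is a veto player or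
`σ` is additive. -/
theorem core_nonempty_iff {V : Type*} [Fintype V] [DecidableEq V] [Nonempty V]
    (σ : Finset V → ℝ) (η : ℝ)
    (hmono : ∀ S T : Finset V, S ⊆ T → σ S ≤ σ T)
    (hsub : ∀ (S T : Finset V) (u : V), S ⊆ T → u ∉ T →
      σ (insert u T) - σ T ≤ σ (insert u S) - σ S)
    (hempty : σ ∅ = 0) (hη0 : 0 ≤ η) (hη1 : η ≤ σ univ)
    (f : Finset V → ℝ)
    (hf : ∀ S : Finset V, f S = if η ≤ σ S then σ S else 0) :
    (∃ x : V → ℝ, (∑ i, x i) = σ univ ∧ ∀ S : Finset V, f S ≤ ∑ i ∈ S, x i) ↔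
      ((∃ i : V, ∀ S : Finset V, i ∉ S → σ S < η) ∨
        (∀ S : Finset V, σ S = ∑ i ∈ S, σ {i})) :=
  core_nonempty_iff_general σ η hmono hsub hempty f hf
end

section
/- Let σ : 2^V → ℝ be monotone and submodular with σ(∅) = 0, and let x ∈ ℝ^V satisfy x_i ≥ 0 for all i ∈ V. Let S ⊆ V be nonempty with σ(S) > 0 and σ({i}) > 0 for every i ∈ S. Then 1 − x(S)/σ(S) ≤ max_{i∈S} (1 − x_i/σ({i})), i.e. the relative dissatisfaction g(T) = 1 − x(T)/σ(T) attains its maximum over subsets at singletons. -/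
open Finset

lemma subadd_aux {V : Type*} [Fintype V] [DecidableEq V]
    (σ : Finset V → ℝ)
    (hsub : ∀ (S T : Finset V) (u : V), S ⊆ T → u ∉ T →
      σ (insert u T) - σ T ≤ σ (insert u S) - σ S)
    (hempty : σ ∅ = 0) (S : Finset V) : σ S ≤ ∑ i ∈ S, σ {i} := by
  induction S using Finset.induction_on with
  | empty => simp [hempty]
  | @insert a S ha ih =>
    rw [Finset.sum_insert ha]
    have h := hsub ∅ S a (Finset.empty_subset S) ha
    simp [hempty] at h
    linarith

/-- For a monotone submodular `σ` and a nonnegative allocation `x`,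
the relative dissatisfaction `1 - x(S)/σ(S)` of a coalition `S` is at most the
maximum relative dissatisfaction of its single players. -/
theorem relative_dissatisfaction_max_at_singletons {V : Type*} [Fintype V] [DecidableEq V]
    [Nonempty V]
    (σ : Finset V → ℝ)
    (hmono : ∀ S T : Finset V, S ⊆ T → σ S ≤ σ T)
    (hsub : ∀ (S T : Finset V) (u : V), S ⊆ T → u ∉ T →
      σ (insert u T) - σ T ≤ σ (insert u S) - σ S)
    (hempty : σ ∅ = 0)
    (x : V → ℝ) (hx : ∀ i, 0 ≤ x i)
    (S : Finset V) (hS : S.Nonempty) (hσS : 0 < σ S) (hσi : ∀ i ∈ S, 0 < σ {i}) :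
    1 - (∑ i ∈ S, x i) / σ S ≤ S.sup' hS (fun i => 1 - x i / σ {i}) := by
  obtain ⟨i0, hi0, hm⟩ := S.exists_mem_eq_inf' hS (fun i => x i / σ {i})
  set m := S.inf' hS (fun i => x i / σ {i}) with hmdef
  have hm0 : 0 ≤ m := by
    rw [hm]
    exact div_nonneg (hx i0) (hσi i0 hi0).le
  have hkey : m * σ S ≤ ∑ i ∈ S, x i := by
    calc m * σ S ≤ m * ∑ i ∈ S, σ {i} :=
          mul_le_mul_of_nonneg_left (subadd_aux σ hsub hempty S) hm0
      _ = ∑ i ∈ S, m * σ {i} := Finset.mul_sum _ _ _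
      _ ≤ ∑ i ∈ S, x i := by
          apply Finset.sum_le_sum
          intro i hi
          have h1 : m ≤ x i / σ {i} := Finset.inf'_le _ hi
          have h2 := (hσi i hi)
          calc m * σ {i} ≤ (x i / σ {i}) * σ {i} :=
                mul_le_mul_of_nonneg_right h1 h2.le
            _ = x i := div_mul_cancel₀ _ h2.ne'
  have h3 : m ≤ (∑ i ∈ S, x i) / σ S := (le_div_iff₀ hσS).mpr hkey
  have h4 : 1 - (∑ i ∈ S, x i) / σ S ≤ 1 - x i0 / σ {i0} := by
    rw [hm] at h3; linarith
  exact h4.trans (Finset.le_sup' (fun i => 1 - x i / σ {i}) hi0)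
end

section
/- Let G be a finite simple graph with vertex set W and edge set E, and for S ⊆ W let σ(S) = 2(I(S) + C(S)). Then the absolute least-core value of the game (W, σ), namely the infimum over all x ∈ ℝ^W with x_i ≥ 0 for all i and x(W) = 2|E| of max_{S⊆W} (σ(S) − x(S)), equals the maximum cut value c* = max_{S⊆W} C(S). -/
open Finset

/-- number of edges of `G` with both endpoints in `S` -/
noncomputable def edgesInside {W : Type*} (G : SimpleGraph W) (S : Finset W) : ℕ :=
  {e ∈ G.edgeSet | ∀ v ∈ e, v ∈ S}.ncard

/-- number of edges of `G` with exactly one endpoint in `S` (size of the cut) -/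
noncomputable def cutSize {W : Type*} (G : SimpleGraph W) (S : Finset W) : ℕ :=
  {e ∈ G.edgeSet | (∃ v ∈ e, v ∈ S) ∧ ¬ (∀ v ∈ e, v ∈ S)}.ncard

/-- the profit function `σ(S) = 2(I(S) + C(S))` -/
noncomputable def sigmaCut {W : Type*} (G : SimpleGraph W) (S : Finset W) : ℝ :=
  2 * ((edgesInside G S : ℝ) + (cutSize G S : ℝ))

section Aux
variable {W : Type*} [Fintype W] [DecidableEq W] (G : SimpleGraph W) [DecidableRel G.Adj]

lemma edgesInside_eq_card (S : Finset W) :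
    edgesInside G S = (G.edgeFinset.filter (fun e => ∀ v ∈ e, v ∈ S)).card := by
  rw [edgesInside, ← Set.ncard_coe_finset]
  congr 1
  ext e
  simp [SimpleGraph.mem_edgeFinset]

lemma cutSize_eq_card (S : Finset W) :
    cutSize G S =
      (G.edgeFinset.filter (fun e => (∃ v ∈ e, v ∈ S) ∧ ¬ (∀ v ∈ e, v ∈ S))).card := by
  rw [cutSize, ← Set.ncard_coe_finset]
  congr 1
  ext e
  simp [SimpleGraph.mem_edgeFinset]

lemma sum_incidence_eq (T : Finset W) :
    ∑ i ∈ T, ((G.edgeFinset.filter (fun e => i ∈ e)).card) =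
      2 * edgesInside G T + cutSize G T := by
  rw [edgesInside_eq_card, cutSize_eq_card]
  have h1 : ∀ i ∈ T, (G.edgeFinset.filter (fun e => i ∈ e)).card
      = ∑ e ∈ G.edgeFinset, if i ∈ e then 1 else 0 := by
    intro i _; rw [Finset.card_filter]
  rw [Finset.sum_congr rfl h1, Finset.sum_comm]
  have h2 : ∀ e ∈ G.edgeFinset, (∑ i ∈ T, if i ∈ e then 1 else 0)
      = (if (∀ v ∈ e, v ∈ T) then 2 else 0)
        + (if ((∃ v ∈ e, v ∈ T) ∧ ¬ (∀ v ∈ e, v ∈ T)) then 1 else 0) := by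
    intro e he
    rw [SimpleGraph.mem_edgeFinset] at he
    induction e with
    | h a b =>
      have hab : a ≠ b := (G.mem_edgeSet.mp he).ne
      have hsum : (∑ i ∈ T, if i ∈ s(a, b) then 1 else 0)
          = (if a ∈ T then 1 else 0) + (if b ∈ T then 1 else 0) := by
        have : ∀ i ∈ T, (if i ∈ s(a, b) then 1 else 0)
            = (if i = a then 1 else 0) + (if i = b then 1 else 0) := by
          intro i _
          by_cases hia : i = a <;> by_cases hib : i = b <;>
            simp_all [Sym2.mem_iff]
        rw [Finset.sum_congr rfl this, Finset.sum_add_distrib,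
          Finset.sum_ite_eq' T a (fun _ => 1), Finset.sum_ite_eq' T b (fun _ => 1)]
      rw [hsum]
      by_cases ha : a ∈ T <;> by_cases hb : b ∈ T <;>
        simp_all [Sym2.ball, Sym2.mem_iff]
  rw [Finset.sum_congr rfl h2, Finset.sum_add_distrib]
  congr 1
  · rw [Finset.sum_ite, Finset.sum_const, Finset.sum_const]; simp [mul_comm]
  · rw [Finset.sum_ite, Finset.sum_const, Finset.sum_const]; simp

lemma edges_partition (S : Finset W) :
    edgesInside G S + edgesInside G Sᶜ + cutSize G S = G.edgeFinset.card := by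
  rw [edgesInside_eq_card, edgesInside_eq_card, cutSize_eq_card]
  have : ∀ e ∈ G.edgeFinset,
      ((if (∀ v ∈ e, v ∈ S) then 1 else 0)
        + (if (∀ v ∈ e, v ∈ Sᶜ) then 1 else 0))
        + (if ((∃ v ∈ e, v ∈ S) ∧ ¬ (∀ v ∈ e, v ∈ S)) then 1 else 0) = 1 := by
    intro e he
    rw [SimpleGraph.mem_edgeFinset] at he
    induction e with
    | h a b =>
      have hab : a ≠ b := (G.mem_edgeSet.mp he).ne
      by_cases ha : a ∈ S <;> by_cases hb : b ∈ S <;>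
        simp_all [Sym2.ball, Sym2.mem_iff]
  calc _ = ∑ e ∈ G.edgeFinset, (((if (∀ v ∈ e, v ∈ S) then 1 else 0)
        + (if (∀ v ∈ e, v ∈ Sᶜ) then 1 else 0))
        + (if ((∃ v ∈ e, v ∈ S) ∧ ¬ (∀ v ∈ e, v ∈ S)) then 1 else 0)) := by
        rw [Finset.sum_add_distrib, Finset.sum_add_distrib]
        rw [← Finset.card_filter, ← Finset.card_filter, ← Finset.card_filter]
    _ = ∑ e ∈ G.edgeFinset, 1 := Finset.sum_congr rfl this
    _ = G.edgeFinset.card := by simp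

lemma cutSize_compl (S : Finset W) : cutSize G Sᶜ = cutSize G S := by
  rw [cutSize_eq_card, cutSize_eq_card]
  congr 1
  apply Finset.filter_congr
  intro e he
  rw [SimpleGraph.mem_edgeFinset] at he
  induction e with
  | h a b =>
    have hab : a ≠ b := (G.mem_edgeSet.mp he).ne
    by_cases ha : a ∈ S <;> by_cases hb : b ∈ S <;>
      simp_all [Sym2.ball, Sym2.mem_iff]

lemma edgesInside_univ : edgesInside G (Finset.univ : Finset W) = G.edgeFinset.card := by
  rw [edgesInside_eq_card]
  simp

lemma cutSize_univ : cutSize G (Finset.univ : Finset W) = 0 := by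
  rw [cutSize_eq_card]
  simp

end Aux

/-- The absolute least-core value of the game `(W, σ)` with
`σ(S) = 2(I(S) + C(S))` equals the maximum cut value of `G`. -/
theorem alcv_eq_maxcut {W : Type*} [Fintype W] [Nonempty W] (G : SimpleGraph W) :
    sInf {v : ℝ | ∃ x : W → ℝ, (∀ i, 0 ≤ x i) ∧
        (∑ i, x i) = 2 * (G.edgeSet.ncard : ℝ) ∧
        v = Finset.univ.sup' Finset.univ_nonempty
              (fun T : Finset W => sigmaCut G T - ∑ i ∈ T, x i)} =
      Finset.univ.sup' Finset.univ_nonempty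
        (fun S : Finset W => (cutSize G S : ℝ)) := by
  classical
  set c : ℝ := Finset.univ.sup' Finset.univ_nonempty
    (fun S : Finset W => (cutSize G S : ℝ)) with hc
  have hE : (G.edgeSet.ncard : ℝ) = (G.edgeFinset.card : ℝ) := by
    rw [← SimpleGraph.coe_edgeFinset, Set.ncard_coe_finset]
  set x : W → ℝ := fun i => ((G.edgeFinset.filter (fun e => i ∈ e)).card : ℝ) with hxdef
  have hx0 : ∀ i, 0 ≤ x i := fun i => Nat.cast_nonneg _
  have hsum : ∀ T : Finset W,
      ∑ i ∈ T, x i = 2 * (edgesInside G T : ℝ) + (cutSize G T : ℝ) := by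
    intro T
    have h := congrArg (Nat.cast : ℕ → ℝ) (sum_incidence_eq G T)
    push_cast at h
    simpa [hxdef] using h
  have hxW : (∑ i, x i) = 2 * (G.edgeSet.ncard : ℝ) := by
    have := hsum Finset.univ
    rw [edgesInside_univ, cutSize_univ] at this
    rw [this, hE]; push_cast; ring
  have hmem : c ∈ {v : ℝ | ∃ x : W → ℝ, (∀ i, 0 ≤ x i) ∧
      (∑ i, x i) = 2 * (G.edgeSet.ncard : ℝ) ∧
      v = Finset.univ.sup' Finset.univ_nonempty
            (fun T : Finset W => sigmaCut G T - ∑ i ∈ T, x i)} := by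
    refine ⟨x, hx0, hxW, ?_⟩
    rw [hc]
    refine Finset.sup'_congr _ rfl ?_
    intro T _
    rw [sigmaCut, hsum T]; ring
  have hlb : ∀ v ∈ {v : ℝ | ∃ x : W → ℝ, (∀ i, 0 ≤ x i) ∧
      (∑ i, x i) = 2 * (G.edgeSet.ncard : ℝ) ∧
      v = Finset.univ.sup' Finset.univ_nonempty
            (fun T : Finset W => sigmaCut G T - ∑ i ∈ T, x i)}, c ≤ v := by
    rintro v ⟨y, hy0, hyW, rfl⟩
    rw [hc]
    apply Finset.sup'_le
    intro S _
    have h1 : sigmaCut G S - ∑ i ∈ S, y i ≤ Finset.univ.sup' Finset.univ_nonempty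
        (fun T : Finset W => sigmaCut G T - ∑ i ∈ T, y i) :=
      Finset.le_sup' (fun T : Finset W => sigmaCut G T - ∑ i ∈ T, y i) (Finset.mem_univ S)
    have h2 : sigmaCut G Sᶜ - ∑ i ∈ Sᶜ, y i ≤ Finset.univ.sup' Finset.univ_nonempty
        (fun T : Finset W => sigmaCut G T - ∑ i ∈ T, y i) :=
      Finset.le_sup' (fun T : Finset W => sigmaCut G T - ∑ i ∈ T, y i) (Finset.mem_univ Sᶜ)
    have hsc : ∑ i ∈ S, y i + ∑ i ∈ Sᶜ, y i = ∑ i, y i :=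
      Finset.sum_add_sum_compl S y
    have hpart := congrArg (Nat.cast : ℕ → ℝ) (edges_partition G S)
    push_cast at hpart
    have hcc := congrArg (Nat.cast : ℕ → ℝ) (cutSize_compl G S)
    push_cast at hcc
    rw [sigmaCut] at h1
    rw [sigmaCut] at h2
    rw [hyW, hE] at hsc
    linarith
  exact le_antisymm (csInf_le ⟨c, hlb⟩ hmem) (le_csInf ⟨c, hmem⟩ hlb)
end
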